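/- arXiv:2310.09033 — 8 statements merged into one kernel-verified Lean document; each statement's English description precedes it below -/
import Mathlib

section
/- There is no r-regular distance magic graph with r odd. -/
/-- The label set `{1-n, 3-n, ..., n-1}`. -/
def zeroLabels (n : ℕ) : Set ℤ := {a : ℤ | ∃ k : ℕ, k < n ∧ a = 2 * k + 1 - n}

/-- The weight of a vertex: the sum of the labels of its neighbors. -/
noncomputable def wt {V : Type*} (G : SimpleGraph V) (ℓ : V → ℤ) (v : V) : ℤ :=
  ∑ᶠ u ∈ {u | G.Adj v u}, ℓ u

/-- `G` is `r`-regular: every vertex has exactly `r` neighbors. -/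
def IsReg {V : Type*} (G : SimpleGraph V) (r : ℕ) : Prop :=
  ∀ v, {u | G.Adj v u}.ncard = r

/-- Distance magic (standard form): a bijective labeling with labels `{1, ..., n}` and
constant vertex weight. -/
def IsDMStd {V : Type*} (G : SimpleGraph V) (n : ℕ) : Prop :=
  ∃ ℓ : V → ℤ, Function.Injective ℓ ∧ Set.range ℓ = Set.Icc (1 : ℤ) (n : ℤ) ∧
    ∃ κ : ℤ, ∀ v, wt G ℓ v = κ

/-- Distance magic (zero form): a bijective labeling with labels `{1-n, 3-n, ..., n-1}` and
all vertex weights equal to `0`. -/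
def IsDMZero {V : Type*} (G : SimpleGraph V) (n : ℕ) : Prop :=
  ∃ ℓ : V → ℤ, Function.Injective ℓ ∧ Set.range ℓ = zeroLabels n ∧ ∀ v, wt G ℓ v = 0

/-- The wreath graph `W n`: vertices `u_i = (i, false)`, `v_i = (i, true)`,
two vertices adjacent iff their indices differ by `1` in `ZMod n`. -/
def wreath (n : ℕ) : SimpleGraph (ZMod n × Bool) where
  Adj a b := a.1 ≠ b.1 ∧ (b.1 = a.1 + 1 ∨ a.1 = b.1 + 1)
  symm := ⟨by rintro a b ⟨h1, h2⟩; exact ⟨h1.symm, h2.symm⟩⟩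
  loopless := ⟨by rintro a ⟨h1, _⟩; exact h1 rfl⟩

/-- One direction of quasi wreath adjacency, with `x_i = (i, false)` and `y_i = (i, true)`. -/
def qwBase {m : ℕ} (s : ZMod m → Bool) (a b : ZMod m × Bool) : Prop :=
  (a.2 = b.2 ∧ b.1 = a.1 + 1) ∨
  (a.2 ≠ b.2 ∧ b.1 = a.1 ∧ (s a.1 = false ∨ s (a.1 - 1) = false)) ∨
  (a.2 ≠ b.2 ∧ b.1 = a.1 + 1 ∧ s a.1 = true)

/-- The quasi wreath graph `QW(S)` determined by `s : ZMod m → Bool`. -/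
def qwGraph (m : ℕ) (s : ZMod m → Bool) : SimpleGraph (ZMod m × Bool) where
  Adj a b := a ≠ b ∧ (qwBase s a b ∨ qwBase s b a)
  symm := ⟨by rintro a b ⟨h1, h2⟩; exact ⟨h1.symm, h2.symm⟩⟩
  loopless := ⟨by rintro a ⟨h1, _⟩; exact h1 rfl⟩

/-- The conditions on the sequence `S` in the construction of quasi wreath graphs:
`m ≥ 3`, `s 0 = 0`, `s (m-1) = 1`, and no two cyclically consecutive entries are `0`. -/
def qwValid (m : ℕ) (s : ZMod m → Bool) : Prop :=
  3 ≤ m ∧ s 0 = false ∧ s (-1) = true ∧ ∀ i : ZMod m, s i = true ∨ s (i + 1) = true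

/-- The block label `ℓ_i = ℓ(x_i) + ℓ(y_i)`. -/
def blockLabel {m : ℕ} (ℓ : ZMod m × Bool → ℤ) (i : ZMod m) : ℤ :=
  ℓ (i, false) + ℓ (i, true)

/-- The blocks `B_{i+1}, ..., B_{i+j}` form a segment of length `j`:
`s i = 0` and `j ≥ 1` is minimal with `s (i+j) = 0`. -/
def IsSegment {m : ℕ} (s : ZMod m → Bool) (i : ZMod m) (j : ℕ) : Prop :=
  s i = false ∧ 1 ≤ j ∧ s (i + (j : ZMod m)) = false ∧
    ∀ r : ℕ, 1 ≤ r → r < j → s (i + (r : ZMod m)) = true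

/-!
Summing the constant weight `κ` over all `n` vertices counts every label exactly `r` times, so
`n κ = r (1 + ⋯ + n) = r n (n + 1) / 2`, i.e. `2 κ = r (n + 1)`. By the handshake lemma `n r` is
even, so for odd `r` the order `n` is even and `r (n + 1)` is odd, a contradiction.
-/

open Finset

namespace SimpleGraph

variable {V : Type*} (G : SimpleGraph V)

theorem wt_eq_sum_neighborFinset (ℓ : V → ℤ) (v : V) [Fintype (G.neighborSet v)] :
    wt G ℓ v = ∑ u ∈ G.neighborFinset v, ℓ u := by
  rw [wt, ← finsum_mem_coe_finset, coe_neighborFinset]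
  rfl

variable [Fintype V] [DecidableRel G.Adj]

theorem sum_sum_neighborFinset {M : Type*} [AddCommMonoid M] (f : V → M) :
    ∑ v, ∑ u ∈ G.neighborFinset v, f u = ∑ u, G.degree u • f u := by
  rw [sum_comm' (t' := univ) (s' := fun u => G.neighborFinset u)
    (fun v u => by simp [mem_neighborFinset, G.adj_comm])]
  simp only [sum_const, card_neighborFinset_eq_degree]

variable {G} in
theorem IsRegularOfDegree.even_card {r : ℕ} (hG : G.IsRegularOfDegree r) (hr : Odd r) :
    Even (Fintype.card V) := by
  have handshake := G.sum_degrees_eq_twice_card_edges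
  simp only [hG.degree_eq, sum_const, card_univ, smul_eq_mul] at handshake
  exact (Nat.even_mul.mp ⟨_, handshake.trans (two_mul _)⟩).resolve_right
    (Nat.not_even_iff_odd.mpr hr)

end SimpleGraph

theorem IsReg.isRegularOfDegree {V : Type*} {G : SimpleGraph V} [G.LocallyFinite] {r : ℕ}
    (h : IsReg G r) : G.IsRegularOfDegree r := fun v => by
  rw [← h v, ← G.card_neighborFinset_eq_degree, ← Set.ncard_coe_finset, G.coe_neighborFinset]
  rfl

theorem sum_Icc_one_mul_two (n : ℕ) : (∑ x ∈ Icc (1 : ℤ) n, x) * 2 = n * (n + 1) := by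
  induction n with
  | zero => simp
  | succ n ih =>
    rw [Nat.cast_succ, ← insert_Icc_right_eq_Icc_add_one (by omega),
      sum_insert (by simp), add_mul, ih]
    ring

theorem Function.Injective.sum_eq_sum_of_range_eq {V M : Type*} [Fintype V] [DecidableEq M]
    [AddCommMonoid M] {ℓ : V → M} (hℓ : Function.Injective ℓ) {s : Finset M}
    (hs : Set.range ℓ = s) :
    ∑ v, ℓ v = ∑ x ∈ s, x := by
  have : univ.image ℓ = s := coe_injective (by simpa using hs)
  rw [← this, sum_image fun _ _ _ _ h => hℓ h]

theorem IsReg.two_mul_eq_of_wt_eq_const {V : Type*} [Fintype V] [Nonempty V]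
    {G : SimpleGraph V} {r : ℕ} (hreg : IsReg G r) {ℓ : V → ℤ} (hℓ : Function.Injective ℓ)
    (hrange : Set.range ℓ = Set.Icc (1 : ℤ) (Fintype.card V)) {κ : ℤ} (hκ : ∀ v, wt G ℓ v = κ) :
    2 * κ = r * (Fintype.card V + 1) := by
  classical
  set n := Fintype.card V
  have double_count : n * κ = r * ∑ v, ℓ v := by
    calc (n : ℤ) * κ = ∑ v, wt G ℓ v := by simp [hκ, n]
      _ = ∑ v, ∑ u ∈ G.neighborFinset v, ℓ u := by simp only [G.wt_eq_sum_neighborFinset]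
      _ = r * ∑ v, ℓ v := by
        simp [G.sum_sum_neighborFinset, hreg.isRegularOfDegree.degree_eq, mul_sum]
  have gauss : (∑ v, ℓ v) * 2 = n * (n + 1) := by
    rw [hℓ.sum_eq_sum_of_range_eq (s := Icc 1 n) (by simpa using hrange), sum_Icc_one_mul_two]
  have hn : (n : ℤ) ≠ 0 := by exact_mod_cast Fintype.card_ne_zero
  apply mul_left_cancel₀ hn
  linear_combination 2 * double_count + r * gauss

theorem stmt1 {V : Type*} [Fintype V] [Nonempty V] (G : SimpleGraph V) (r : ℕ)
    (hodd : Odd r) (hreg : IsReg G r) :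
    ¬ IsDMStd G (Fintype.card V) := by
  classical
  rintro ⟨ℓ, hℓ, hrange, κ, hκ⟩
  have magic := hreg.two_mul_eq_of_wt_eq_const hℓ hrange hκ
  have hn : Even (Fintype.card V) := hreg.isRegularOfDegree.even_card hodd
  have hodd_rhs : Odd ((r : ℤ) * (Fintype.card V + 1)) :=
    (Int.odd_coe_nat r |>.mpr hodd).mul (by exact_mod_cast hn.add_one)
  exact Int.not_even_iff_odd.mpr hodd_rhs ⟨κ, by rw [← magic, two_mul]⟩
end

section
/- For every integer n ≥ 3, the wreath graph W(n) is distance magic; explicitly, the labeling assigning to the pair u_i, v_i the labels 2n−2i−1 and −(2n−2i−1) for each i ∈ Z_n is a bijection onto {1−2n, 3−2n, ..., 2n−1} giving every vertex weight 0. -/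
/-!
Each `u_i` and `v_i` have the same neighbourhood, and the labelling gives them opposite labels.
Swapping `u_j ↔ v_j` therefore maps every neighbourhood onto itself while negating the labels, so
every weight equals its own negative. The labels `±(2n - 2i - 1)`, `0 ≤ i < n`, are exactly the odd
integers between `-2n` and `2n`.
-/

theorem wt_eq_zero_of_equiv_neg {V : Type*} (G : SimpleGraph V) (ℓ : V → ℤ) (σ : V ≃ V)
    (hadj : ∀ v u, G.Adj v (σ u) ↔ G.Adj v u) (hneg : ∀ u, ℓ (σ u) = -ℓ u) (v : V) :
    wt G ℓ v = 0 := by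
  have hswap : wt G ℓ v = -wt G ℓ v := by
    calc wt G ℓ v = ∑ᶠ u, ∑ᶠ (_ : G.Adj v (σ u)), ℓ (σ u) :=
          (finsum_comp_equiv σ (f := fun u => ∑ᶠ (_ : G.Adj v u), ℓ u)).symm
      _ = ∑ᶠ u, -∑ᶠ (_ : G.Adj v u), ℓ u := by
          simp only [hadj, hneg, finsum_neg_distrib]
      _ = -wt G ℓ v := finsum_neg_distrib _
  omega

def wreathLabel (n : ℕ) (a : ZMod n × Bool) : ℤ :=
  (if a.2 then (-1 : ℤ) else 1) * (2 * n - 2 * (a.1.val : ℤ) - 1)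

section wreathLabel

variable {n : ℕ}

@[simp]
theorem wreathLabel_mk_false (i : ZMod n) : wreathLabel n (i, false) = 2 * n - 2 * i.val - 1 := by
  simp [wreathLabel]

@[simp]
theorem wreathLabel_mk_true (i : ZMod n) : wreathLabel n (i, true) = 2 * i.val + 1 - 2 * n := by
  simp only [wreathLabel, ↓reduceIte, neg_one_mul, neg_sub]
  ring

theorem wt_wreath_wreathLabel (v : ZMod n × Bool) : wt (wreath n) (wreathLabel n) v = 0 :=
  wt_eq_zero_of_equiv_neg _ _ ((Equiv.refl _).prodCongr Equiv.boolNot) (fun _ _ => Iff.rfl)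
    (by
      rintro ⟨i, _ | _⟩ <;>
        simp only [Equiv.prodCongr_apply, Equiv.coe_refl, Prod.map_apply, id_eq,
          Equiv.boolNot_apply, Bool.not_false, Bool.not_true, wreathLabel_mk_false,
          wreathLabel_mk_true] <;> ring) v

variable [NeZero n]

theorem wreathLabel_injective : Function.Injective (wreathLabel n) := by
  rintro ⟨i, b⟩ ⟨j, c⟩ h
  have hi := ZMod.val_lt i
  have hj := ZMod.val_lt j
  have hval : i.val = j.val ∧ b = c := by
    cases b <;> cases c <;>
      simp only [wreathLabel_mk_false, wreathLabel_mk_true, Bool.false_eq_true,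
        Bool.true_eq_false, and_true, and_false] at h ⊢ <;> omega
  exact Prod.ext (ZMod.val_injective n hval.1) hval.2

theorem range_wreathLabel : Set.range (wreathLabel n) = zeroLabels (2 * n) := by
  ext a
  constructor
  · rintro ⟨⟨i, _ | _⟩, rfl⟩ <;> have hi := ZMod.val_lt i
    · exact ⟨2 * n - 1 - i.val, by omega, by simp only [wreathLabel_mk_false]; omega⟩
    · exact ⟨i.val, by omega, by simp only [wreathLabel_mk_true]; push_cast; ring⟩
  · rintro ⟨k, hk, rfl⟩
    by_cases hkn : k < n
    · refine ⟨((k : ZMod n), true), ?_⟩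
      simp only [wreathLabel_mk_true, ZMod.val_cast_of_lt hkn]
      push_cast
      ring
    · refine ⟨(((2 * n - 1 - k : ℕ) : ZMod n), false), ?_⟩
      simp only [wreathLabel_mk_false, ZMod.val_cast_of_lt (show 2 * n - 1 - k < n by omega)]
      omega

end wreathLabel

theorem stmt3 (n : ℕ) (hn : 3 ≤ n) :
    let ℓ : ZMod n × Bool → ℤ :=
      fun a => (if a.2 then (-1 : ℤ) else 1) * (2 * n - 2 * (a.1.val : ℤ) - 1)
    Function.Injective ℓ ∧ Set.range ℓ = zeroLabels (2 * n) ∧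
      (∀ v, wt (wreath n) ℓ v = 0) ∧ IsDMZero (wreath n) (2 * n) := by
  have : NeZero n := ⟨by omega⟩
  exact ⟨wreathLabel_injective, range_wreathLabel, wt_wreath_wreathLabel,
    wreathLabel n, wreathLabel_injective, range_wreathLabel, wt_wreath_wreathLabel⟩
end

section
/- Let Γ be a regular graph of even valency and order n. Suppose 0 is an eigenvalue of the adjacency matrix of Γ and B is a basis of the eigenspace for eigenvalue 0. If there exist indices i ≠ j such that b(i) = b(j) for all b ∈ B, then Γ is not distance magic. -/
open Finset Matrix Function

lemma two_mul_sum_Icc_one (n : ℕ) : 2 * ∑ a ∈ Icc (1 : ℤ) n, a = n * (n + 1) := by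
  induction n with
  | zero => simp
  | succ n ih =>
    push_cast
    rw [← insert_Icc_right_eq_Icc_add_one (by omega), sum_insert (by simp), mul_add, ih]
    ring

lemma two_mul_sum_eq_of_range_eq_Icc {V : Type*} [Fintype V] {ℓ : V → ℤ} (hinj : Injective ℓ)
    (hrange : Set.range ℓ = Set.Icc 1 (Fintype.card V : ℤ)) :
    2 * ∑ v, ℓ v = Fintype.card V * (Fintype.card V + 1 : ℤ) := by
  have himage : univ.image ℓ = Icc (1 : ℤ) (Fintype.card V) := by
    rw [← coe_inj, coe_image, coe_univ, Set.image_univ, hrange, coe_Icc]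
  calc 2 * ∑ v, ℓ v = 2 * ∑ a ∈ univ.image ℓ, a := by rw [sum_image fun a _ b _ h => hinj h]
    _ = _ := by rw [himage, two_mul_sum_Icc_one]

namespace Module.Basis

lemma apply_eq_apply_of_forall {R V M ι : Type*} [Semiring R] [AddCommMonoid M] [Module R M]
    {W : Submodule R (V → M)} (B : Basis ι R W) {i j : V}
    (hB : ∀ k, (B k : V → M) i = (B k : V → M) j) (w : W) : (w : V → M) i = (w : V → M) j :=
  LinearMap.congr_fun (B.ext (f₁ := (LinearMap.proj i).comp W.subtype)
    (f₂ := (LinearMap.proj j).comp W.subtype) hB) w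

end Module.Basis

namespace SimpleGraph

variable {V : Type*} [Fintype V] (G : SimpleGraph V) [DecidableRel G.Adj]

lemma wt_eq_sum (ℓ : V → ℤ) (v : V) : wt G ℓ v = ∑ u ∈ G.neighborFinset v, ℓ u := by
  rw [wt, ← finsum_mem_coe_finset, coe_neighborFinset]
  rfl

lemma adjMatrix_mulVec_intCast {R : Type*} [Ring R] (ℓ : V → ℤ) :
    G.adjMatrix R *ᵥ (fun v => (ℓ v : R)) = fun v => (wt G ℓ v : R) := by
  funext v
  rw [adjMatrix_mulVec_apply, wt_eq_sum, Int.cast_sum]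

variable {G}

lemma _root_.IsReg.isRegularOfDegree_s4 {r : ℕ} (h : IsReg G r) : G.IsRegularOfDegree r := fun v => by
  rw [← h v, ← card_neighborFinset_eq_degree, ← Set.ncard_coe_finset, coe_neighborFinset]
  rfl

lemma IsRegularOfDegree.sum_adjMatrix_mulVec {R : Type*} [CommSemiring R] {r : ℕ}
    (hG : G.IsRegularOfDegree r) (x : V → R) : ∑ v, (G.adjMatrix R *ᵥ x) v = r * ∑ v, x v := by
  have hA_one : G.adjMatrix R *ᵥ 1 = fun _ => (r : R) :=
    funext fun _ => by simpa using adjMatrix_mulVec_const_apply_of_regular (a := (1 : R)) hG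
  rw [← one_dotProduct, dotProduct_mulVec, ← mulVec_transpose, transpose_adjMatrix, hA_one,
    dotProduct, mul_sum]

end SimpleGraph

open SimpleGraph in
theorem IsDMStd.exists_injective_adjMatrix_mulVec_eq_zero {V : Type*} [Fintype V]
    {G : SimpleGraph V} [DecidableRel G.Adj] {r : ℕ} (hreg : IsReg G r)
    (hG : IsDMStd G (Fintype.card V)) :
    ∃ y : V → ℝ, Injective y ∧ G.adjMatrix ℝ *ᵥ y = 0 := by
  obtain ⟨ℓ, hinj, hrange, κ, hκ⟩ := hG
  set n := Fintype.card V
  let y : V → ℝ := fun v => 2 * ℓ v - (n + 1)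
  refine ⟨y, fun u v h => hinj (by simpa [y] using h), ?_⟩
  have hAy : G.adjMatrix ℝ *ᵥ y = fun _ => 2 * (κ : ℝ) - r * (n + 1) := by
    have hy : y = (2 : ℝ) • (fun v => (ℓ v : ℝ)) - const V ((n : ℝ) + 1) := rfl
    funext v
    rw [hy, mulVec_sub, mulVec_smul, adjMatrix_mulVec_intCast, Pi.sub_apply, Pi.smul_apply,
      adjMatrix_mulVec_const_apply_of_regular hreg.isRegularOfDegree_s4, hκ, smul_eq_mul]
  have hy_sum : ∑ v, y v = 0 := by
    have h := two_mul_sum_eq_of_range_eq_Icc hinj hrange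
    simp only [y, sum_sub_distrib, ← mul_sum, sum_const, card_univ, nsmul_eq_mul]
    exact_mod_cast (by rw [h]; ring : 2 * ∑ v, ℓ v - n * (n + 1 : ℤ) = 0)
  have hn_mul : (n : ℝ) * (2 * (κ : ℝ) - r * (n + 1)) = 0 := by
    have h := hreg.isRegularOfDegree_s4.sum_adjMatrix_mulVec y
    rwa [hAy, hy_sum, mul_zero, sum_const, card_univ, nsmul_eq_mul] at h
  funext v
  have : Nonempty V := ⟨v⟩
  rw [hAy, Pi.zero_apply]
  exact (mul_eq_zero.mp hn_mul).resolve_left (Nat.cast_ne_zero.mpr Fintype.card_ne_zero)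

theorem stmt4_general {V : Type*} [Fintype V] [DecidableEq V] (G : SimpleGraph V)
    [DecidableRel G.Adj] (r : ℕ) (hreg : IsReg G r)
    {ι : Type*} (B : Module.Basis ι ℝ ↥(Module.End.eigenspace (Matrix.toLin' (G.adjMatrix ℝ)) 0))
    (i j : V) (hij : i ≠ j)
    (hB : ∀ k : ι, (B k : V → ℝ) i = (B k : V → ℝ) j) :
    ¬ IsDMStd G (Fintype.card V) := by
  intro hG
  obtain ⟨y, hy_inj, hy_ker⟩ := hG.exists_injective_adjMatrix_mulVec_eq_zero hreg
  have hy_mem : y ∈ Module.End.eigenspace (toLin' (G.adjMatrix ℝ)) 0 := by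
    rw [Module.End.mem_eigenspace_iff, zero_smul, toLin'_apply, hy_ker]
  exact hij (hy_inj (B.apply_eq_apply_of_forall hB ⟨y, hy_mem⟩))

theorem stmt4 {V : Type*} [Fintype V] [DecidableEq V] (G : SimpleGraph V)
    [DecidableRel G.Adj] (r : ℕ) (hr : Even r) (hreg : IsReg G r)
    (hev : Module.End.HasEigenvalue (Matrix.toLin' (G.adjMatrix ℝ)) 0)
    {ι : Type*} (B : Module.Basis ι ℝ ↥(Module.End.eigenspace (Matrix.toLin' (G.adjMatrix ℝ)) 0))
    (i j : V) (hij : i ≠ j)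
    (hB : ∀ k : ι, (B k : V → ℝ) i = (B k : V → ℝ) j) :
    ¬ IsDMStd G (Fintype.card V) :=
  stmt4_general G r hreg B i j hij hB
end

section
/- Let QW(S) be a distance magic quasi wreath graph with distance magic labeling ℓ (labels from {1−2m,...,2m−1}, all vertex weights 0), and let ℓ_i = ℓ(x_i) + ℓ(y_i) denote block labels. Then for every i ∈ Z_m with s_i = 0 one has ℓ_{i+1} ≠ −ℓ_{i+2}. -/
/-! Since `s i = 0` forces `s (i+1) = 1`, the neighbourhood of `x_{i+1}` is
`{x_i, y_{i+1}, x_{i+2}, y_{i+2}}`, so its zero weight reads `ℓ(x_i) + ℓ(y_{i+1}) + ℓ_{i+2} = 0`.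
If `ℓ_{i+1} = -ℓ_{i+2}`, i.e. `ℓ(x_{i+1}) + ℓ(y_{i+1}) + ℓ_{i+2} = 0`, then `ℓ(x_i) = ℓ(x_{i+1})`,
contradicting injectivity. -/

theorem ZMod.natCast_ne_zero_of_pos_of_lt {m k : ℕ} (hk : 0 < k) (hkm : k < m) :
    (k : ZMod m) ≠ 0 := by
  rw [Ne, ZMod.natCast_eq_zero_iff]
  exact Nat.not_dvd_of_pos_of_lt hk hkm

theorem wt_eq_sum_of_neighborSet_eq {V : Type*} {G : SimpleGraph V} {v : V} {t : Finset V}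
    (ht : G.neighborSet v = t) (ℓ : V → ℤ) : wt G ℓ v = ∑ u ∈ t, ℓ u := by
  rw [wt, ← finsum_mem_coe_finset, ← ht]
  rfl

section QuasiWreath

variable {m : ℕ} {s : ZMod m → Bool} {i : ZMod m}

theorem qwGraph_neighborSet_succ_false (h1 : (1 : ZMod m) ≠ 0) (h2 : (2 : ZMod m) ≠ 0)
    (hi : s i = false) (hi1 : s (i + 1) = true) :
    (qwGraph m s).neighborSet (i + 1, false) =
      ↑({(i, false), (i + 1, true), (i + 2, false), (i + 2, true)} : Finset (ZMod m × Bool)) := by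
  have h12 : (1 : ZMod m) ≠ 2 := fun h => h1 (by linear_combination -h)
  ext ⟨j, b⟩
  simp only [SimpleGraph.mem_neighborSet, qwGraph, qwBase, Finset.coe_insert, Finset.coe_singleton,
    Set.mem_insert_iff, Set.mem_singleton_iff, Prod.mk.injEq, ne_eq]
  constructor
  · grind
  · rintro (⟨rfl, rfl⟩ | ⟨rfl, rfl⟩ | ⟨rfl, rfl⟩ | ⟨rfl, rfl⟩) <;>
      simp [h1, h2, h12, hi, hi1, add_assoc, one_add_one_eq_two]

theorem wt_qwGraph_succ_false (h1 : (1 : ZMod m) ≠ 0) (h2 : (2 : ZMod m) ≠ 0)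
    (hi : s i = false) (hi1 : s (i + 1) = true) (ℓ : ZMod m × Bool → ℤ) :
    wt (qwGraph m s) ℓ (i + 1, false) = ℓ (i, false) + ℓ (i + 1, true) + blockLabel ℓ (i + 2) := by
  have h12 : (1 : ZMod m) ≠ 2 := fun h => h1 (by linear_combination -h)
  rw [wt_eq_sum_of_neighborSet_eq (qwGraph_neighborSet_succ_false h1 h2 hi hi1), blockLabel,
    Finset.sum_insert, Finset.sum_insert, Finset.sum_insert, Finset.sum_singleton, add_assoc]
  all_goals simp [h1, h2, h12]

end QuasiWreath

theorem stmt6_general (m : ℕ) (s : ZMod m → Bool) (hv : qwValid m s)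
    (ℓ : ZMod m × Bool → ℤ) (hinj : Function.Injective ℓ)
    (hw : ∀ v, wt (qwGraph m s) ℓ v = 0)
    (i : ZMod m) (hi : s i = false) :
    blockLabel ℓ (i + 1) ≠ -blockLabel ℓ (i + 2) := by
  obtain ⟨hm, -, -, hconsec⟩ := hv
  have hi1 : s (i + 1) = true := (hconsec i).resolve_left (by simp [hi])
  have h1 : (1 : ZMod m) ≠ 0 := by
    exact_mod_cast ZMod.natCast_ne_zero_of_pos_of_lt (k := 1) one_pos (by omega)
  have h2 : (2 : ZMod m) ≠ 0 := by
    exact_mod_cast ZMod.natCast_ne_zero_of_pos_of_lt (k := 2) two_pos hm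
  intro hblock
  have hx : ℓ (i, false) = ℓ (i + 1, false) := by
    have hwt := hw (i + 1, false)
    rw [wt_qwGraph_succ_false h1 h2 hi hi1] at hwt
    unfold blockLabel at hblock hwt
    linarith
  have hadj : (qwGraph m s).Adj (i + 1, false) (i, false) := by
    rw [← SimpleGraph.mem_neighborSet, qwGraph_neighborSet_succ_false h1 h2 hi hi1]
    simp
  exact hadj.ne (hinj hx).symm

theorem stmt6 (m : ℕ) (s : ZMod m → Bool) (hv : qwValid m s)
    (ℓ : ZMod m × Bool → ℤ) (hinj : Function.Injective ℓ)
    (hrange : Set.range ℓ = zeroLabels (2 * m))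
    (hw : ∀ v, wt (qwGraph m s) ℓ v = 0)
    (i : ZMod m) (hi : s i = false) :
    blockLabel ℓ (i + 1) ≠ -blockLabel ℓ (i + 2) :=
  stmt6_general m s hv ℓ hinj hw i hi
end

section
/- Let QW(S) be a distance magic quasi wreath graph with distance magic labeling ℓ and block labels ℓ_i = ℓ(x_i) + ℓ(y_i). Then for each i ∈ Z_m: if s_i = s_{i+1} = 1 then ℓ_{i+2} = −ℓ_i; if s_i = 0 and s_{i+1} = 1 then ℓ_{i+2} = −(ℓ_i + ℓ_{i+1})/2; and if s_i = 1 and s_{i+1} = 0 then ℓ_{i+2} = −2ℓ_i − ℓ_{i+1}. -/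
/-! The two neighbours of `(i + 1, b)` of its own colour are `(i, b)` and `(i + 2, b)`; its two
neighbours of the other colour are read off `s i` and `s (i + 1)`. So the vanishing of the weight
of `x_{i+1}` (when `s i = s (i + 1) = 1`) or of the sum of the weights of `x_{i+1}` and `y_{i+1}`
(in the two mixed cases) is a linear relation between `ℓ_i`, `ℓ_{i+1}` and `ℓ_{i+2}`. -/

lemma qwGraph_adj_iff {m : ℕ} {s : ZMod m → Bool} (h1 : (1 : ZMod m) ≠ 0)
    (i j : ZMod m) (b c : Bool) :
    (qwGraph m s).Adj (i, b) (j, c) ↔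
      (c = b ∧ (j = i + 1 ∨ j = i - 1)) ∨
      (c = !b ∧ (j = i ∧ (s i = false ∨ s (i - 1) = false) ∨
        j = i + 1 ∧ s i = true ∨ j = i - 1 ∧ s (i - 1) = true)) := by
  have hne : ∀ k : ZMod m, k + 1 ≠ k := fun k h => h1 (by linear_combination h)
  simp only [qwGraph, qwBase, ne_eq, Prod.mk.injEq, eq_sub_iff_add_eq]
  cases b <;> cases c <;> grind

lemma wt_qwGraph {m : ℕ} {s : ZMod m → Bool} (h1 : (1 : ZMod m) ≠ 0) (h2 : (2 : ZMod m) ≠ 0)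
    (ℓ : ZMod m × Bool → ℤ) (i : ZMod m) (b : Bool) :
    wt (qwGraph m s) ℓ (i, b) =
      ℓ (i + 1, b) + ℓ (i - 1, b) +
        (if s i = false ∨ s (i - 1) = false then ℓ (i, !b) else 0) +
        (if s i = true then ℓ (i + 1, !b) else 0) +
        (if s (i - 1) = true then ℓ (i - 1, !b) else 0) := by
  classical
  have hsucc : i + 1 ≠ i := fun h => h1 (by linear_combination h)
  have hpred : i - 1 ≠ i := fun h => h1 (by linear_combination -h)
  have hpm : i + 1 ≠ i - 1 := fun h => h2 (by linear_combination h)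
  have hb : (!b) ≠ b := Bool.not_ne_self b
  set T : Finset (ZMod m × Bool) := {(i + 1, b), (i - 1, b), (i, !b), (i + 1, !b), (i - 1, !b)}
  have hnbr : {u | (qwGraph m s).Adj (i, b) u} = ↑(T.filter ((qwGraph m s).Adj (i, b))) := by
    ext ⟨j, c⟩
    simp only [Set.mem_ofPred_eq, Finset.coe_filter, T, Finset.mem_insert, Finset.mem_singleton,
      Prod.mk.injEq, qwGraph_adj_iff h1]
    grind
  rw [wt, hnbr, finsum_mem_coe_finset, Finset.sum_filter]
  simp [T, qwGraph_adj_iff h1, hsucc, hpred, hpm, hsucc.symm, hpred.symm, hpm.symm, hb, hb.symm,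
    add_assoc]

section Blocks

variable {m : ℕ} {s : ZMod m → Bool} (h1 : (1 : ZMod m) ≠ 0) (h2 : (2 : ZMod m) ≠ 0)
  (ℓ : ZMod m × Bool → ℤ) {i : ZMod m}
include h1 h2

lemma wt_qwGraph_of_true_true (hcur : s i = true) (hnext : s (i + 1) = true) (b : Bool) :
    wt (qwGraph m s) ℓ (i + 1, b) = blockLabel ℓ i + blockLabel ℓ (i + 2) := by
  rw [wt_qwGraph h1 h2, add_sub_cancel_right, add_assoc i 1 1, one_add_one_eq_two]
  cases b <;>
    simp only [hcur, hnext, Bool.true_eq_false, or_self, ↓reduceIte, add_zero, Bool.not_false,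
      Bool.not_true, blockLabel] <;>
    ring

lemma wt_add_wt_qwGraph_of_false_true (hcur : s i = false) (hnext : s (i + 1) = true) :
    wt (qwGraph m s) ℓ (i + 1, false) + wt (qwGraph m s) ℓ (i + 1, true) =
      blockLabel ℓ i + blockLabel ℓ (i + 1) + 2 * blockLabel ℓ (i + 2) := by
  simp only [wt_qwGraph h1 h2, add_assoc i 1 1, one_add_one_eq_two, add_sub_cancel_right, hcur,
    hnext, Bool.true_eq_false, Bool.false_eq_true, or_true, ↓reduceIte, add_zero,
    Bool.not_false, Bool.not_true, blockLabel]
  ring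

lemma wt_add_wt_qwGraph_of_true_false (hcur : s i = true) (hnext : s (i + 1) = false) :
    wt (qwGraph m s) ℓ (i + 1, false) + wt (qwGraph m s) ℓ (i + 1, true) =
      2 * blockLabel ℓ i + blockLabel ℓ (i + 1) + blockLabel ℓ (i + 2) := by
  simp only [wt_qwGraph h1 h2, add_assoc i 1 1, one_add_one_eq_two, add_sub_cancel_right, hcur,
    hnext, Bool.true_eq_false, Bool.false_eq_true, or_false, ↓reduceIte, add_zero,
    Bool.not_false, Bool.not_true, blockLabel]
  ring

end Blocks

theorem stmt7_general (m : ℕ) (s : ZMod m → Bool) (hv : qwValid m s)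
    (ℓ : ZMod m × Bool → ℤ)
    (hw : ∀ v, wt (qwGraph m s) ℓ v = 0) (i : ZMod m) :
    (s i = true → s (i + 1) = true →
      blockLabel ℓ (i + 2) = -blockLabel ℓ i) ∧
    (s i = false → s (i + 1) = true →
      2 * blockLabel ℓ (i + 2) = -(blockLabel ℓ i + blockLabel ℓ (i + 1))) ∧
    (s i = true → s (i + 1) = false →
      blockLabel ℓ (i + 2) = -(2 * blockLabel ℓ i) - blockLabel ℓ (i + 1)) := by
  have natCast_ne_zero {n : ℕ} (hn : 0 < n) (hnm : n < m) : (n : ZMod m) ≠ 0 := by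
    rw [Ne, ZMod.natCast_eq_zero_iff]
    exact Nat.not_dvd_of_pos_of_lt hn hnm
  have h1 : (1 : ZMod m) ≠ 0 := by exact_mod_cast natCast_ne_zero one_pos (by linarith [hv.1])
  have h2 : (2 : ZMod m) ≠ 0 := by exact_mod_cast natCast_ne_zero two_pos (by linarith [hv.1])
  refine ⟨fun hcur hnext => ?_, fun hcur hnext => ?_, fun hcur hnext => ?_⟩
  · linarith [wt_qwGraph_of_true_true h1 h2 ℓ hcur hnext false, hw (i + 1, false)]
  · linarith [wt_add_wt_qwGraph_of_false_true h1 h2 ℓ hcur hnext, hw (i + 1, false),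
      hw (i + 1, true)]
  · linarith [wt_add_wt_qwGraph_of_true_false h1 h2 ℓ hcur hnext, hw (i + 1, false),
      hw (i + 1, true)]

theorem stmt7 (m : ℕ) (s : ZMod m → Bool) (hv : qwValid m s)
    (ℓ : ZMod m × Bool → ℤ) (hinj : Function.Injective ℓ)
    (hrange : Set.range ℓ = zeroLabels (2 * m))
    (hw : ∀ v, wt (qwGraph m s) ℓ v = 0) (i : ZMod m) :
    (s i = true → s (i + 1) = true →
      blockLabel ℓ (i + 2) = -blockLabel ℓ i) ∧
    (s i = false → s (i + 1) = true →
      2 * blockLabel ℓ (i + 2) = -(blockLabel ℓ i + blockLabel ℓ (i + 1))) ∧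
    (s i = true → s (i + 1) = false →
      blockLabel ℓ (i + 2) = -(2 * blockLabel ℓ i) - blockLabel ℓ (i + 1)) :=
  stmt7_general m s hv ℓ hw i
end

section
/- Let Γ be a 4-regular distance magic graph of order n admitting a distance magic labeling ℓ (onto {1−n,...,n−1}, all weights 0) and a 4-cycle C = (a, b, c, d) with ℓ(a) + ℓ(c) = 0 and ℓ(b) + ℓ(d) = 0. Then the graph Γ' of order n+2 obtained by deleting the four edges of C, adding two new vertices, and joining each new vertex to all four vertices of C, is a 4-regular distance magic graph. -/
/-- The edges of the 4-cycle `(a, b, c, d)`, in one direction. -/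
def kfkCyc {V : Type*} (a b c d : V) (u v : V) : Prop :=
  (u = a ∧ v = b) ∨ (u = b ∧ v = c) ∨ (u = c ∧ v = d) ∨ (u = d ∧ v = a)

/-- The graph obtained from `G` by deleting the four edges of the 4-cycle `(a, b, c, d)`,
adding two new vertices and joining each of them to all four vertices of the cycle. -/
def kfkGraph {V : Type*} (G : SimpleGraph V) (a b c d : V) :
    SimpleGraph (V ⊕ Fin 2) where
  Adj x y :=
    match x, y with
    | Sum.inl u, Sum.inl v => G.Adj u v ∧ ¬(kfkCyc a b c d u v ∨ kfkCyc a b c d v u)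
    | Sum.inl u, Sum.inr _ => u = a ∨ u = b ∨ u = c ∨ u = d
    | Sum.inr _, Sum.inl v => v = a ∨ v = b ∨ v = c ∨ v = d
    | Sum.inr _, Sum.inr _ => False
  symm := ⟨by
    rintro (u | u) (v | v) h
    · exact ⟨h.1.symm, fun hc => h.2 hc.symm⟩
    · exact h
    · exact h
    · exact h⟩
  loopless := ⟨by
    rintro (u | u) h
    · exact G.irrefl h.1
    · exact h⟩

/-!
Extend `ℓ` by `n + 1` and `-(n + 1)` on the two new vertices. A vertex of `C` loses its two cycle
neighbours, which are antipodal and hence carry opposite labels, and gains the two new vertices,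
whose labels cancel as well; so its degree and its weight do not change. A new vertex has weight
`ℓ a + ℓ b + ℓ c + ℓ d = 0`. The rotation `(a, b, c, d) ↦ (b, c, d, a)` does not change `Γ'`, so
among the vertices of `C` only `a` needs to be treated.
-/

lemma zeroLabels_add_two (n : ℕ) :
    zeroLabels (n + 2) = zeroLabels n ∪ {(n : ℤ) + 1, -((n : ℤ) + 1)} := by
  ext x
  simp only [zeroLabels, Set.mem_ofPred_eq, Set.mem_union, Set.mem_insert_iff,
    Set.mem_singleton_iff]
  constructor
  · rintro ⟨k, hk, rfl⟩
    rcases Nat.lt_or_ge 0 k with h0 | h0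
    · rcases Nat.lt_or_ge k (n + 1) with h1 | h1
      · exact Or.inl ⟨k - 1, by omega, by omega⟩
      · right; left; omega
    · right; right; omega
  · rintro (⟨k, hk, rfl⟩ | rfl | rfl)
    · exact ⟨k + 1, by omega, by push_cast; ring⟩
    · exact ⟨n + 1, by omega, by push_cast; ring⟩
    · exact ⟨0, by omega, by push_cast; ring⟩

lemma abs_lt_of_mem_zeroLabels {n : ℕ} {x : ℤ} (hx : x ∈ zeroLabels n) : |x| < n := by
  obtain ⟨k, hk, rfl⟩ := hx
  rw [abs_lt]
  omega

section ExtendLabel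

variable {V : Type*}

def extendLabel (ℓ : V → ℤ) (n : ℕ) : V ⊕ Fin 2 → ℤ :=
  Sum.elim ℓ ![(n : ℤ) + 1, -((n : ℤ) + 1)]

lemma extendLabel_inr_zero_add_inr_one (ℓ : V → ℤ) (n : ℕ) :
    extendLabel ℓ n (Sum.inr 0) + extendLabel ℓ n (Sum.inr 1) = 0 := by
  simp [extendLabel]

lemma range_extendLabel {ℓ : V → ℤ} {n : ℕ} (hrange : Set.range ℓ = zeroLabels n) :
    Set.range (extendLabel ℓ n) = zeroLabels (n + 2) := by
  rw [extendLabel, Set.Sum.elim_range, hrange, Matrix.range_cons_cons_empty, zeroLabels_add_two]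

lemma extendLabel_injective {ℓ : V → ℤ} {n : ℕ} (hinj : Function.Injective ℓ)
    (hrange : Set.range ℓ = zeroLabels n) : Function.Injective (extendLabel ℓ n) := by
  have hsmall : ∀ v, |ℓ v| < n := fun v =>
    abs_lt_of_mem_zeroLabels (hrange ▸ Set.mem_range_self v)
  rintro (x | i) (y | j) h <;>
    simp only [extendLabel, Sum.elim_inl, Sum.elim_inr] at h
  · exact congrArg Sum.inl (hinj h)
  · have := hsmall x
    fin_cases j <;> simp only [abs_lt] at this <;> simp at h <;> omega
  · have := hsmall y
    fin_cases i <;> simp only [abs_lt] at this <;> simp at h <;> omega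
  · fin_cases i <;> fin_cases j <;> simp at h ⊢ <;> omega

end ExtendLabel

section SwapPair

variable {V : Type*} {N : Set V} {b d : V}

/-- The neighbourhood of a cycle vertex in `Γ'`: its two cycle neighbours `b`, `d` are replaced
by the two new vertices. -/
abbrev swapPair (N : Set V) (b d : V) : Set (V ⊕ Fin 2) :=
  Sum.inl '' (N \ {b, d}) ∪ {Sum.inr 0, Sum.inr 1}

lemma disjoint_swapPair (N : Set V) (b d : V) :
    Disjoint (Sum.inl '' (N \ {b, d})) ({Sum.inr 0, Sum.inr 1} : Set (V ⊕ Fin 2)) := by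
  rw [Set.disjoint_left]
  rintro _ ⟨y, _, rfl⟩ (h | h) <;> simp at h

variable [Finite V]

lemma ncard_swapPair (hb : b ∈ N) (hd : d ∈ N) (hbd : b ≠ d) :
    (swapPair N b d).ncard = N.ncard := by
  have hsub : {b, d} ⊆ N := Set.insert_subset hb (Set.singleton_subset_iff.2 hd)
  rw [Set.ncard_union_eq (disjoint_swapPair N b d),
    Set.ncard_image_of_injective _ Sum.inl_injective, Set.ncard_sdiff hsub, Set.ncard_pair hbd,
    Set.ncard_pair (by simp)]
  have : 2 ≤ N.ncard := Set.ncard_pair hbd ▸ Set.ncard_le_ncard hsub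
  omega

lemma finsum_mem_swapPair (hb : b ∈ N) (hd : d ∈ N) (hbd : b ≠ d) (L : V ⊕ Fin 2 → ℤ) :
    ∑ᶠ u ∈ swapPair N b d, L u =
      ∑ᶠ u ∈ N, L (Sum.inl u) - (L (Sum.inl b) + L (Sum.inl d)) +
        (L (Sum.inr 0) + L (Sum.inr 1)) := by
  have hsub : {b, d} ⊆ N := Set.insert_subset hb (Set.singleton_subset_iff.2 hd)
  rw [finsum_mem_union (disjoint_swapPair N b d) (Set.toFinite _) (Set.toFinite _),
    finsum_mem_image Sum.inl_injective.injOn, finsum_mem_pair (by simp),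
    ← Set.sdiff_union_of_subset hsub,
    finsum_mem_union Set.disjoint_sdiff_left (Set.toFinite _) (Set.toFinite _),
    finsum_mem_pair hbd, Set.sdiff_union_of_subset hsub]
  ring

end SwapPair

section KfkGraph

variable {V : Type*} (G : SimpleGraph V) (a b c d : V)

lemma kfkGraph_rotate : kfkGraph G a b c d = kfkGraph G b c d a := by
  have h : ∀ u v : V, kfkCyc a b c d u v ↔ kfkCyc b c d a u v := by
    intro u v; unfold kfkCyc; tauto
  ext x y
  cases x <;> cases y <;> simp only [kfkGraph, h] <;> tauto

lemma neighborSet_kfkGraph_inl_self (hab : a ≠ b) (hac : a ≠ c) (had : a ≠ d) :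
    (kfkGraph G a b c d).neighborSet (Sum.inl a) = swapPair (G.neighborSet a) b d := by
  ext (u | i)
  · simp only [SimpleGraph.mem_neighborSet, kfkGraph, kfkCyc, Set.mem_union, Set.mem_image,
      Set.mem_sdiff, Set.mem_insert_iff, Set.mem_singleton_iff, Sum.inl.injEq, reduceCtorEq,
      or_false, exists_eq_right]
    tauto
  · fin_cases i <;> simp [kfkGraph]

lemma neighborSet_kfkGraph_inl_of_ne {v : V} (ha : v ≠ a) (hb : v ≠ b) (hc : v ≠ c)
    (hd : v ≠ d) :
    (kfkGraph G a b c d).neighborSet (Sum.inl v) = Sum.inl '' G.neighborSet v := by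
  ext (u | i)
  · simp only [SimpleGraph.mem_neighborSet, kfkGraph, kfkCyc, Set.mem_image, Sum.inl.injEq,
      exists_eq_right]
    tauto
  · simp only [SimpleGraph.mem_neighborSet, kfkGraph, Set.mem_image, reduceCtorEq,
      exists_false, and_false, iff_false]
    tauto

lemma neighborSet_kfkGraph_inr (i : Fin 2) :
    (kfkGraph G a b c d).neighborSet (Sum.inr i) =
      {Sum.inl a, Sum.inl b, Sum.inl c, Sum.inl d} := by
  ext (u | j) <;> simp [kfkGraph]

variable {G a b c d} [Finite V]

lemma ncard_neighborSet_kfkGraph_inl_self (hab : G.Adj a b) (had : G.Adj a d) (hac : a ≠ c)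
    (hbd : b ≠ d) :
    ((kfkGraph G a b c d).neighborSet (Sum.inl a)).ncard = (G.neighborSet a).ncard := by
  rw [neighborSet_kfkGraph_inl_self G a b c d hab.ne hac had.ne,
    ncard_swapPair (N := G.neighborSet a) hab had hbd]

lemma finsum_neighborSet_kfkGraph_inl_self (hab : G.Adj a b) (had : G.Adj a d) (hac : a ≠ c)
    (hbd : b ≠ d) {ℓ : V → ℤ} (hlbd : ℓ b + ℓ d = 0) (n : ℕ) :
    ∑ᶠ u ∈ (kfkGraph G a b c d).neighborSet (Sum.inl a), extendLabel ℓ n u =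
      ∑ᶠ u ∈ G.neighborSet a, ℓ u := by
  rw [neighborSet_kfkGraph_inl_self G a b c d hab.ne hac had.ne,
    finsum_mem_swapPair (N := G.neighborSet a) hab had hbd, extendLabel_inr_zero_add_inr_one]
  simp only [extendLabel, Sum.elim_inl, hlbd]
  ring

lemma ncard_neighborSet_kfkGraph_inr (hab : a ≠ b) (hac : a ≠ c) (had : a ≠ d) (hbc : b ≠ c)
    (hbd : b ≠ d) (hcd : c ≠ d) (i : Fin 2) :
    ((kfkGraph G a b c d).neighborSet (Sum.inr i)).ncard = 4 := by
  rw [neighborSet_kfkGraph_inr, Set.ncard_insert_of_notMem (by simp [hab, hac, had]),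
    Set.ncard_insert_of_notMem (by simp [hbc, hbd]), Set.ncard_pair (by simp [hcd])]

lemma finsum_neighborSet_kfkGraph_inr (hab : a ≠ b) (hac : a ≠ c) (had : a ≠ d) (hbc : b ≠ c)
    (hbd : b ≠ d) (hcd : c ≠ d) (ℓ : V → ℤ) (n : ℕ) (i : Fin 2) :
    ∑ᶠ u ∈ (kfkGraph G a b c d).neighborSet (Sum.inr i), extendLabel ℓ n u =
      ℓ a + ℓ b + ℓ c + ℓ d := by
  rw [neighborSet_kfkGraph_inr, finsum_mem_insert _ (by simp [hab, hac, had]) (Set.toFinite _),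
    finsum_mem_insert _ (by simp [hbc, hbd]) (Set.toFinite _), finsum_mem_pair (by simp [hcd])]
  simp only [extendLabel, Sum.elim_inl]
  ring

lemma ncard_neighborSet_kfkGraph_inl (hab : G.Adj a b) (hbc : G.Adj b c) (hcd : G.Adj c d)
    (hda : G.Adj d a) (hac : a ≠ c) (hbd : b ≠ d) (v : V) :
    ((kfkGraph G a b c d).neighborSet (Sum.inl v)).ncard = (G.neighborSet v).ncard := by
  by_cases hv : v = a ∨ v = b ∨ v = c ∨ v = d
  · rcases hv with rfl | rfl | rfl | rfl
    · exact ncard_neighborSet_kfkGraph_inl_self hab hda.symm hac hbd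
    · rw [kfkGraph_rotate]
      exact ncard_neighborSet_kfkGraph_inl_self hbc hab.symm hbd hac.symm
    · rw [kfkGraph_rotate, kfkGraph_rotate]
      exact ncard_neighborSet_kfkGraph_inl_self hcd hbc.symm hac.symm hbd.symm
    · rw [kfkGraph_rotate, kfkGraph_rotate, kfkGraph_rotate]
      exact ncard_neighborSet_kfkGraph_inl_self hda hcd.symm hbd.symm hac
  · push Not at hv
    rw [neighborSet_kfkGraph_inl_of_ne G a b c d hv.1 hv.2.1 hv.2.2.1 hv.2.2.2,
      Set.ncard_image_of_injective _ Sum.inl_injective]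

lemma finsum_neighborSet_kfkGraph_inl (hab : G.Adj a b) (hbc : G.Adj b c) (hcd : G.Adj c d)
    (hda : G.Adj d a) (hac : a ≠ c) (hbd : b ≠ d) {ℓ : V → ℤ} (hlac : ℓ a + ℓ c = 0)
    (hlbd : ℓ b + ℓ d = 0) (n : ℕ) (v : V) :
    ∑ᶠ u ∈ (kfkGraph G a b c d).neighborSet (Sum.inl v), extendLabel ℓ n u =
      ∑ᶠ u ∈ G.neighborSet v, ℓ u := by
  by_cases hv : v = a ∨ v = b ∨ v = c ∨ v = d
  · rcases hv with rfl | rfl | rfl | rfl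
    · exact finsum_neighborSet_kfkGraph_inl_self hab hda.symm hac hbd hlbd n
    · rw [kfkGraph_rotate]
      exact finsum_neighborSet_kfkGraph_inl_self hbc hab.symm hbd hac.symm
        (by rwa [add_comm]) n
    · rw [kfkGraph_rotate, kfkGraph_rotate]
      exact finsum_neighborSet_kfkGraph_inl_self hcd hbc.symm hac.symm hbd.symm
        (by rwa [add_comm]) n
    · rw [kfkGraph_rotate, kfkGraph_rotate, kfkGraph_rotate]
      exact finsum_neighborSet_kfkGraph_inl_self hda hcd.symm hbd.symm hac hlac n
  · push Not at hv
    rw [neighborSet_kfkGraph_inl_of_ne G a b c d hv.1 hv.2.1 hv.2.2.1 hv.2.2.2,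
      finsum_mem_image Sum.inl_injective.injOn]
    rfl

end KfkGraph

theorem stmt12 {V : Type*} [Fintype V] (G : SimpleGraph V) (hreg : IsReg G 4)
    (ℓ : V → ℤ) (hinj : Function.Injective ℓ)
    (hrange : Set.range ℓ = zeroLabels (Fintype.card V))
    (hw : ∀ v, wt G ℓ v = 0)
    (a b c d : V) (hac : a ≠ c) (hbd : b ≠ d)
    (hab : G.Adj a b) (hbc : G.Adj b c) (hcd : G.Adj c d) (hda : G.Adj d a)
    (hlac : ℓ a + ℓ c = 0) (hlbd : ℓ b + ℓ d = 0) :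
    IsReg (kfkGraph G a b c d) 4 ∧
      IsDMZero (kfkGraph G a b c d) (Fintype.card V + 2) := by
  refine ⟨?_, extendLabel ℓ _, extendLabel_injective hinj hrange, range_extendLabel hrange, ?_⟩
  · rintro (v | i)
    · exact (ncard_neighborSet_kfkGraph_inl hab hbc hcd hda hac hbd v).trans (hreg v)
    · exact ncard_neighborSet_kfkGraph_inr hab.ne hac hda.ne' hbc.ne hbd hcd.ne i
  · rintro (v | i)
    · exact (finsum_neighborSet_kfkGraph_inl hab hbc hcd hda hac hbd hlac hlbd _ v).trans (hw v)
    · exact (finsum_neighborSet_kfkGraph_inr hab.ne hac hda.ne' hbc.ne hbd hcd.ne ℓ _ i).trans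
        (by linear_combination hlac + hlbd)
end

section
/- For every integer n ≥ 4, the wreath graph W(n) contains no 3-cycle, while every quasi wreath graph QW(S) contains a 3-cycle; consequently, for n ≥ 4, W(n) is not isomorphic to any quasi wreath graph of the same order. -/
/-! Along a triangle of `W(n)` the index moves by `±1` three times and returns, so
`±1 ± 1 ± 1 = 0` in `ZMod n`, which forces `n ∣ 3`. In `QW(S)`, `s 0 = 0` joins `x_1` to `y_1`
and `s 1 = 1` joins `y_1` to `x_2`, giving the triangle `x_1 x_2 y_1`. -/

theorem three_eq_zero_or_one_eq_zero_of_add_add_eq_zero {R : Type*} [CommRing R] {a b c : R}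
    (ha : a = 1 ∨ a = -1) (hb : b = 1 ∨ b = -1) (hc : c = 1 ∨ c = -1) (h : a + b + c = 0) :
    (3 : R) = 0 ∨ (1 : R) = 0 := by
  rcases ha with rfl | rfl <;> rcases hb with rfl | rfl <;> rcases hc with rfl | rfl
  · exact Or.inl (by linear_combination h)
  all_goals first
    | exact Or.inl (by linear_combination -h)
    | exact Or.inr (by linear_combination h)
    | exact Or.inr (by linear_combination -h)

theorem wreath_adj_fst_sub {n : ℕ} {a b : ZMod n × Bool} (h : (wreath n).Adj a b) :
    b.1 - a.1 = 1 ∨ b.1 - a.1 = -1 := by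
  rcases h.2 with h | h
  · exact Or.inl (by rw [h]; ring)
  · exact Or.inr (by rw [h]; ring)

theorem wreath_cliqueFree_three {n : ℕ} (hn : n ≠ 3) : (wreath n).CliqueFree 3 := by
  intro t ht
  obtain ⟨x, y, z, -, -, -, rfl⟩ := Finset.card_eq_three.mp ht.card_eq
  obtain ⟨hxy, hxz, hyz⟩ := SimpleGraph.is3Clique_triple_iff.mp ht
  have hsum : (y.1 - x.1) + (z.1 - y.1) + (x.1 - z.1) = 0 := by ring
  have hnt : Nontrivial (ZMod n) := ⟨⟨x.1, y.1, hxy.1⟩⟩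
  rcases three_eq_zero_or_one_eq_zero_of_add_add_eq_zero (wreath_adj_fst_sub hxy)
    (wreath_adj_fst_sub hyz) (wreath_adj_fst_sub hxz.symm) hsum with h3 | h1
  · have h3 : ((3 : ℕ) : ZMod n) = 0 := by exact_mod_cast h3
    rw [ZMod.natCast_eq_zero_iff] at h3
    rcases (Nat.dvd_prime Nat.prime_three).mp h3 with rfl | rfl
    · exact not_nontrivial (ZMod 1) hnt
    · exact hn rfl
  · exact one_ne_zero h1

theorem qwGraph_isNClique_three {m : ℕ} {s : ZMod m → Bool} (hm : m ≠ 1) (hs0 : s 0 = false)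
    (hs1 : s 1 = true) :
    (qwGraph m s).IsNClique 3 {(1, false), (2, false), (1, true)} := by
  have h12 : (1 : ZMod m) ≠ 2 := by
    intro h
    have : (1 : ZMod m) = 0 := by linear_combination -h
    exact hm (ZMod.one_eq_zero_iff.mp this)
  refine SimpleGraph.is3Clique_triple_iff.mpr ⟨?_, ?_, ?_⟩
  · exact ⟨by simp [h12], Or.inl (Or.inl ⟨rfl, by ring⟩)⟩
  · exact ⟨by simp, Or.inl (Or.inr (Or.inl ⟨by simp, rfl, Or.inr (by rwa [sub_self])⟩))⟩
  · exact ⟨by simp, Or.inr (Or.inr (Or.inr ⟨by simp, by ring, hs1⟩))⟩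

theorem qwValid.isNClique_three {m : ℕ} {s : ZMod m → Bool} (hs : qwValid m s) :
    (qwGraph m s).IsNClique 3 {(1, false), (2, false), (1, true)} := by
  obtain ⟨hm, hs0, -, hcons⟩ := hs
  have hs1 : s 1 = true := by simpa [hs0] using hcons 0
  exact qwGraph_isNClique_three (by omega) hs0 hs1

theorem stmt13 (n : ℕ) (hn : 4 ≤ n) :
    (¬ ∃ x y z : ZMod n × Bool,
      (wreath n).Adj x y ∧ (wreath n).Adj y z ∧ (wreath n).Adj x z) ∧
    (∀ (m : ℕ) (s : ZMod m → Bool), qwValid m s →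
      ∃ x y z : ZMod m × Bool,
        (qwGraph m s).Adj x y ∧ (qwGraph m s).Adj y z ∧ (qwGraph m s).Adj x z) ∧
    (∀ s : ZMod n → Bool, qwValid n s → IsEmpty (wreath n ≃g qwGraph n s)) := by
  have hfree : (wreath n).CliqueFree 3 := wreath_cliqueFree_three (by omega)
  refine ⟨?_, ?_, ?_⟩
  · rintro ⟨x, y, z, hxy, hyz, hxz⟩
    exact hfree _ (SimpleGraph.is3Clique_triple_iff.mpr ⟨hxy, hxz, hyz⟩)
  · intro m s hs
    obtain ⟨hxy, hxz, hyz⟩ := SimpleGraph.is3Clique_triple_iff.mp hs.isNClique_three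
    exact ⟨_, _, _, hxy, hyz, hxz⟩
  · intro s hs
    exact ⟨fun φ => hfree.comap φ.isContained' _ hs.isNClique_three⟩
end

section
/- The only connected 2-regular distance magic graph is the 4-cycle C_4. -/
/-! In a 2-regular graph with an injective labelling of constant weight `κ`, let `x₁, x₂` be the
neighbours of a vertex `w`. The second neighbours `u₁` of `x₁` and `u₂` of `x₂` both carry the
label `κ - ℓ w`, so `u₁ = u₂`. Then `w, x₁, u₁, x₂` is a 4-cycle closed under adjacency, hence by
connectedness all of `G`. Conversely, labelling `C₄` by `1, 2, 4, 3` in cyclic order gives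
every vertex weight `5`. -/

open Function SimpleGraph

section

variable {V W : Type*} {G : SimpleGraph V}

theorem SimpleGraph.Connected.eq_univ_of_adj_closed (hG : G.Connected) {s : Set V}
    (hs : s.Nonempty) (hclosed : ∀ ⦃v w⦄, G.Adj v w → v ∈ s → w ∈ s) : s = Set.univ := by
  refine Set.eq_univ_of_forall fun w => ?_
  obtain ⟨v, hv⟩ := hs
  obtain ⟨p⟩ := hG.preconnected v w
  induction p with
  | nil => exact hv
  | cons h _ ih => exact ih (hclosed h hv)

theorem SimpleGraph.Connected.nonempty_iso_cycleGraph {n : ℕ} (hG : G.Connected)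
    (g : Fin (n + 2) → V) (hg : Injective g)
    (hN : ∀ i, G.neighborSet (g i) = {g (i - 1), g (i + 1)}) :
    Nonempty (G ≃g cycleGraph (n + 2)) := by
  have hsurj : Surjective g := by
    refine Set.range_eq_univ.1 (hG.eq_univ_of_adj_closed (Set.range_nonempty g) ?_)
    rintro - t h ⟨i, rfl⟩
    rw [← mem_neighborSet, hN i] at h
    rcases h with rfl | rfl <;> exact Set.mem_range_self _
  have hadj : ∀ a b, G.Adj (g a) (g b) ↔ (cycleGraph (n + 2)).Adj a b := fun a b => by
    rw [← mem_neighborSet, ← mem_neighborSet, hN, cycleGraph_neighborSet, ← Set.image_pair,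
      hg.mem_set_image]
  exact ⟨(⟨Equiv.ofBijective g ⟨hg, hsurj⟩, hadj _ _⟩ : cycleGraph (n + 2) ≃g G).symm⟩

theorem wt_eq_finsum_neighborSet (ℓ : V → ℤ) (v : V) :
    wt G ℓ v = ∑ᶠ u ∈ G.neighborSet v, ℓ u := rfl

theorem wt_eq_add {ℓ : V → ℤ} {v a b : V} (hab : a ≠ b) (h : G.neighborSet v = {a, b}) :
    wt G ℓ v = ℓ a + ℓ b := by
  rw [wt_eq_finsum_neighborSet, h, finsum_mem_pair hab]

theorem wt_comp_iso {H : SimpleGraph W} (e : G ≃g H) (ℓ : W → ℤ) (v : V) :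
    wt G (ℓ ∘ e) v = wt H ℓ (e v) := by
  have hN : H.neighborSet (e v) = e '' G.neighborSet v := by
    ext t
    obtain ⟨s, rfl⟩ := e.surjective t
    simp [e.injective.mem_set_image, e.map_adj_iff]
  rw [wt_eq_finsum_neighborSet, wt_eq_finsum_neighborSet, hN,
    finsum_mem_image e.injective.injOn]
  rfl

theorem IsDMStd.of_iso {H : SimpleGraph W} {n : ℕ} (e : G ≃g H) (h : IsDMStd H n) :
    IsDMStd G n := by
  obtain ⟨ℓ, hinj, hrange, κ, hκ⟩ := h
  refine ⟨ℓ ∘ e, hinj.comp e.injective, ?_, κ, fun v => (wt_comp_iso e ℓ v).trans (hκ _)⟩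
  rwa [EquivLike.range_comp]

theorem IsReg.ncard_neighborSet {r : ℕ} (hreg : IsReg G r) (v : V) :
    (G.neighborSet v).ncard = r := hreg v

theorem IsReg.neighborSet_eq_pair (hreg : IsReg G 2) {v a b : V} (hab : a ≠ b)
    (ha : G.Adj v a) (hb : G.Adj v b) : G.neighborSet v = {a, b} := by
  have h2 := hreg.ncard_neighborSet v
  refine (Set.eq_of_subset_of_ncard_le ?_ ?_ (Set.finite_of_ncard_ne_zero (by omega))).symm
  · exact Set.insert_subset ha (Set.singleton_subset_iff.2 hb)
  · rw [h2, Set.ncard_pair hab]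

theorem IsReg.exists_neighborSet_eq_pair_of_adj (hreg : IsReg G 2) {v w : V} (hw : G.Adj v w) :
    ∃ u, G.Adj v u ∧ w ≠ u ∧ G.neighborSet v = {w, u} := by
  obtain ⟨u, hu, huw⟩ := Set.exists_ne_of_one_lt_ncard (s := G.neighborSet v)
    (by rw [hreg.ncard_neighborSet]; norm_num) w
  exact ⟨u, hu, huw.symm, hreg.neighborSet_eq_pair huw.symm hw hu⟩

theorem IsReg.exists_fourCycle_of_wt_const (hreg : IsReg G 2) {ℓ : V → ℤ} (hℓ : Injective ℓ)
    {κ : ℤ} (hκ : ∀ v, wt G ℓ v = κ) (w : V) :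
    ∃ g : Fin 4 → V, Injective g ∧ ∀ i, G.neighborSet (g i) = {g (i - 1), g (i + 1)} := by
  obtain ⟨x₁, x₂, hx, hw⟩ := Set.ncard_eq_two.1 (hreg.ncard_neighborSet w)
  have h₁ : G.Adj w x₁ := by rw [← mem_neighborSet, hw]; simp
  have h₂ : G.Adj w x₂ := by rw [← mem_neighborSet, hw]; simp
  obtain ⟨u, hu₁, hwu, hx₁⟩ := hreg.exists_neighborSet_eq_pair_of_adj h₁.symm
  obtain ⟨u₂, hu₂, hwu₂, hx₂⟩ := hreg.exists_neighborSet_eq_pair_of_adj h₂.symm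
  obtain rfl : u = u₂ := hℓ <| by
    have e₁ := hκ x₁; have e₂ := hκ x₂
    rw [wt_eq_add hwu hx₁] at e₁; rw [wt_eq_add hwu₂ hx₂] at e₂
    linarith
  have hu := hreg.neighborSet_eq_pair hx hu₁.symm hu₂.symm
  refine ⟨![w, x₁, u, x₂], ?_, fun i => ?_⟩
  · simp [Injective, Fin.forall_fin_succ, hx, hwu, h₁.ne, h₂.ne, hu₁.ne, hu₂.ne, hx.symm,
      hwu.symm, h₁.ne.symm, h₂.ne.symm, hu₁.ne.symm, hu₂.ne.symm]
  · fin_cases i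
    · exact hw.trans (Set.pair_comm _ _)
    · exact hx₁
    · exact hu
    · exact hx₂.trans (Set.pair_comm _ _)

theorem isDMStd_cycleGraph_four : IsDMStd (cycleGraph 4) 4 := by
  refine ⟨![1, 2, 4, 3], by decide, ?_, 5, fun v => ?_⟩
  · ext x
    constructor
    · rintro ⟨i, rfl⟩
      fin_cases i <;> simp
    · rintro ⟨h₁, h₄⟩
      interval_cases x
      exacts [⟨0, rfl⟩, ⟨1, rfl⟩, ⟨3, rfl⟩, ⟨2, rfl⟩]
  · rw [wt_eq_add (by revert v; decide) (cycleGraph_neighborSet (n := 2))]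
    revert v
    decide

end

theorem stmt18 {V : Type*} [Fintype V] (G : SimpleGraph V)
    (hconn : G.Connected) (hreg : IsReg G 2) :
    IsDMStd G (Fintype.card V) ↔ Nonempty (G ≃g SimpleGraph.cycleGraph 4) := by
  constructor
  · rintro ⟨ℓ, hℓ, -, κ, hκ⟩
    obtain ⟨g, hg, hN⟩ := hreg.exists_fourCycle_of_wt_const hℓ hκ hconn.nonempty.some
    exact hconn.nonempty_iso_cycleGraph g hg hN
  · rintro ⟨e⟩
    rw [Fintype.card_congr e.toEquiv, Fintype.card_fin]
    exact isDMStd_cycleGraph_four.of_iso e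
end
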